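/- For every finite abelian group H and every subset S ⊆ H, the Haar graph H(H,S) is a Cayley graph. -/

import Mathlib

/-- The Haar graph of a group `H` with connection set `S ⊆ H`: the bipartite
graph on two copies of `H` (indexed by `Bool`; `false` is the copy `H₀`,
`true` is the copy `H₁`) in which `h₀` is adjacent to `(s*h)₁` for `s ∈ S`. -/
def haarGraph {H : Type*} [Group H] (S : Set H) : SimpleGraph (Bool × H) where
  Adj u v := (u.1 = false ∧ v.1 = true ∧ v.2 * u.2⁻¹ ∈ S) ∨
             (u.1 = true ∧ v.1 = false ∧ u.2 * v.2⁻¹ ∈ S)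
  symm := by
    refine ⟨?_⟩
    rintro ⟨i, x⟩ ⟨j, y⟩ (⟨h1, h2, h3⟩ | ⟨h1, h2, h3⟩)
    · exact Or.inr ⟨h2, h1, h3⟩
    · exact Or.inl ⟨h2, h1, h3⟩
  loopless := by
    refine ⟨?_⟩
    rintro ⟨i, x⟩ (⟨h1, h2, _⟩ | ⟨h1, h2, _⟩) <;> simp_all

/-- A graph is a Cayley graph if its automorphism group contains a subgroup
acting regularly on the vertex set. -/
def IsCayleyGraph {V : Type*} (Γ : SimpleGraph V) : Prop :=
  ∃ G : Subgroup (Equiv.Perm V),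
    (∀ g ∈ G, ∀ u v : V, Γ.Adj (g u) (g v) ↔ Γ.Adj u v) ∧
    (∀ u v : V, ∃! g : Equiv.Perm V, g ∈ G ∧ g u = v)

/-- A graph is vertex-transitive if its automorphism group acts transitively
on the vertices. -/
def IsVertexTransitive {V : Type*} (Γ : SimpleGraph V) : Prop :=
  ∀ u v : V, ∃ f : Γ ≃g Γ, f u = v

/-- A group is inner abelian if it is non-abelian but every proper subgroup
is abelian. -/
def IsInnerAbelian (H : Type*) [Group H] : Prop :=
  (¬ ∀ a b : H, a * b = b * a) ∧
    ∀ K : Subgroup H, K ≠ ⊤ → ∀ a b : H, a ∈ K → b ∈ K → a * b = b * a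

/-!
The generalized dihedral group of `H` acts regularly on `H(H, S)` by automorphisms: it is
generated by the right translations `xᵢ ↦ (xh)ᵢ` and the reflection `xᵢ ↦ (x⁻¹)₁₋ᵢ`, which maps
the edge `{x₀, y₁}` to `{(y⁻¹)₀, (x⁻¹)₁}` and so preserves edges because `y x⁻¹ = x⁻¹ (y⁻¹)⁻¹`
in an abelian group. It is transitive by inspection. It is free because it commutes with a
second transitive group, generated by `x₀ ↦ (xk)₀, y₁ ↦ (yk⁻¹)₁` and the swap `xᵢ ↦ x₁₋ᵢ`
(the two play the roles of the left and right regular representations), and a permutation that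
commutes with a transitive group and fixes a point is the identity.
-/

open Equiv Subgroup

def SimpleGraph.autSubgroup {V : Type*} (Γ : SimpleGraph V) : Subgroup (Perm V) where
  carrier := {g | ∀ u v, Γ.Adj (g u) (g v) ↔ Γ.Adj u v}
  one_mem' _ _ := Iff.rfl
  mul_mem' hg hh u v := (hg _ _).trans (hh u v)
  inv_mem' {g} hg u v := by simpa using (hg (g⁻¹ u) (g⁻¹ v)).symm

namespace Equiv.Perm

variable {α : Type*}

theorem exists_mem_apply_eq_of_forall_exists {G : Subgroup (Perm α)} {a : α}
    (hG : ∀ v, ∃ g ∈ G, g a = v) (u v : α) : ∃ g ∈ G, g u = v := by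
  obtain ⟨g, hg, rfl⟩ := hG u
  obtain ⟨g', hg', rfl⟩ := hG v
  exact ⟨g' * g⁻¹, mul_mem hg' (inv_mem hg), by simp⟩

theorem eq_one_of_mem_centralizer_of_apply_eq {K : Subgroup (Perm α)} {g : Perm α}
    (hg : g ∈ centralizer K) {a : α} (hK : ∀ b, ∃ k ∈ K, k a = b) (ha : g a = a) :
    g = 1 := by
  ext b
  obtain ⟨k, hk, rfl⟩ := hK b
  calc g (k a) = (g * k) a := rfl
    _ = (k * g) a := by rw [mem_centralizer_iff.mp hg k hk]
    _ = k a := congrArg k ha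

end Equiv.Perm

theorem isCayleyGraph_of_le_centralizer {V : Type*} {Γ : SimpleGraph V}
    {G K : Subgroup (Perm V)} (hGΓ : G ≤ Γ.autSubgroup) (hGK : G ≤ centralizer K) {a : V}
    (hG : ∀ v, ∃ g ∈ G, g a = v) (hK : ∀ v, ∃ k ∈ K, k a = v) : IsCayleyGraph Γ := by
  refine ⟨G, fun g hg => hGΓ hg, fun u v => ?_⟩
  obtain ⟨g, hg, rfl⟩ := Perm.exists_mem_apply_eq_of_forall_exists hG u v
  obtain ⟨k, hk, rfl⟩ := hK u
  refine ⟨g, ⟨hg, rfl⟩, fun g' ⟨hg', hg'g⟩ => ?_⟩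
  have hfix : g⁻¹ * g' = 1 :=
    Perm.eq_one_of_mem_centralizer_of_apply_eq (hGK (mul_mem (inv_mem hg) hg'))
      (Perm.exists_mem_apply_eq_of_forall_exists hK (k a)) (by simp [Perm.mul_apply, hg'g])
  exact (inv_mul_eq_one.mp hfix).symm

namespace haarGraph

section Group

variable {H : Type*} [Group H]

def reflect : Perm (Bool × H) := prodCongr boolNot (Equiv.inv H)

def translate (h : H) : Perm (Bool × H) := prodCongrRight fun _ => Equiv.mulRight h

def swapSides : Perm (Bool × H) := prodCongr boolNot (Equiv.refl H)

def twist (k : H) : Perm (Bool × H) :=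
  prodCongrRight fun i => Equiv.mulRight (if i then k⁻¹ else k)

variable (H) in
def dihedral : Subgroup (Perm (Bool × H)) := closure (insert reflect (Set.range translate))

variable (H) in
def dihedralOpposite : Subgroup (Perm (Bool × H)) :=
  closure (insert swapSides (Set.range twist))

theorem translate_mem_autSubgroup (S : Set H) (h : H) :
    translate h ∈ (haarGraph S).autSubgroup := by
  rintro ⟨_ | _, x⟩ ⟨_ | _, y⟩ <;> simp [haarGraph, translate]

theorem exists_mem_dihedral_apply_eq (v : Bool × H) : ∃ g ∈ dihedral H, g (false, 1) = v := by
  obtain ⟨_ | _, y⟩ := v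
  · exact ⟨translate y, subset_closure (Or.inr ⟨y, rfl⟩), by simp [translate]⟩
  · refine ⟨translate y * reflect,
      mul_mem (subset_closure (Or.inr ⟨y, rfl⟩)) (subset_closure (Or.inl rfl)), ?_⟩
    simp [translate, reflect, boolNot, Perm.mul_apply]

theorem exists_mem_dihedralOpposite_apply_eq (v : Bool × H) :
    ∃ k ∈ dihedralOpposite H, k (false, 1) = v := by
  obtain ⟨_ | _, y⟩ := v
  · exact ⟨twist y, subset_closure (Or.inr ⟨y, rfl⟩), by simp [twist]⟩
  · refine ⟨twist y⁻¹ * swapSides,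
      mul_mem (subset_closure (Or.inr ⟨y⁻¹, rfl⟩)) (subset_closure (Or.inl rfl)), ?_⟩
    simp [twist, swapSides, boolNot, Perm.mul_apply]

end Group

section CommGroup

variable {H : Type*} [CommGroup H]

theorem reflect_mem_autSubgroup (S : Set H) : reflect ∈ (haarGraph S).autSubgroup := by
  rintro ⟨_ | _, x⟩ ⟨_ | _, y⟩ <;> simp [haarGraph, reflect, boolNot, mul_comm]

theorem dihedral_le_autSubgroup (S : Set H) : dihedral H ≤ (haarGraph S).autSubgroup := by
  rw [dihedral, closure_le]
  rintro t (rfl | ⟨h, rfl⟩)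
  exacts [reflect_mem_autSubgroup S, translate_mem_autSubgroup S h]

theorem dihedral_le_centralizer : dihedral H ≤ centralizer (dihedralOpposite H) := by
  rw [dihedral, dihedralOpposite, centralizer_closure, closure_le]
  rintro t (rfl | ⟨h, rfl⟩) <;> rw [SetLike.mem_coe, mem_centralizer_iff] <;>
    rintro k (rfl | ⟨k, rfl⟩) <;> ext ⟨_ | _, x⟩ <;>
    simp [reflect, translate, twist, swapSides, boolNot, Perm.mul_apply, mul_comm, mul_assoc,
      mul_left_comm]

end CommGroup

end haarGraph

theorem abelian_haar_graphs_are_cayley_general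
    {H : Type*} [CommGroup H] (S : Set H) :
    IsCayleyGraph (haarGraph S) :=
  isCayleyGraph_of_le_centralizer (haarGraph.dihedral_le_autSubgroup S)
    haarGraph.dihedral_le_centralizer haarGraph.exists_mem_dihedral_apply_eq
    haarGraph.exists_mem_dihedralOpposite_apply_eq

theorem abelian_haar_graphs_are_cayley
    {H : Type*} [CommGroup H] [Finite H] (S : Set H) :
    IsCayleyGraph (haarGraph S) :=
  abelian_haar_graphs_are_cayley_general S
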